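/- arXiv:2408.07572 — 3 statements merged into one kernel-verified Lean document; each statement's English description precedes it below -/
import Mathlib

section
/- Let (X,d) be a metric space, let E ⊆ X be Borel, and let S ⊆ E be measurable with S^α ⊆ E for some α > 0, where S^α is the set of points at distance less than α from S. Let μ and ν be finite Borel measures on X with μ(S) = μ(E), ν(S) = ν(E), and d_LP(μ,ν) < α. Then d_LP(μ|_E, ν|_E) ≤ d_LP(μ,ν), where μ|_E denotes the restriction of μ to E, i.e. μ|_E(Q) = μ(E ∩ Q) for every Borel set Q. -/
set_option autoImplicit false

open MeasureTheory Metric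

/-! Up to a null set, `μ|_E` is `μ|_S`, and since `S^ε ⊆ E` for `ε ≤ α`, the `ε`-thickening
of any `B ∩ S` lies in `E`.  Hence every Lévy–Prokhorov inequality
`μ(B ∩ S) ≤ ν((B ∩ S)^ε) + ε` of the unrestricted measures is already one between the
restricted measures. -/

section

variable {X : Type*} [PseudoMetricSpace X] [MeasurableSpace X] {μ ν : Measure X} {E S : Set X}

theorem restrict_le_restrict_thickening_add_of_ae_eq {ε : ENNReal} (hS : MeasurableSet S)
    (hthick : thickening ε.toReal S ⊆ E) (hμ : S =ᵐ[μ] E)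
    (h : ∀ B, MeasurableSet B → μ B ≤ ν (thickening ε.toReal B) + ε)
    {B : Set X} (hB : MeasurableSet B) :
    μ.restrict E B ≤ ν.restrict E (thickening ε.toReal B) + ε := by
  have hsub : thickening ε.toReal (B ∩ S) ⊆ thickening ε.toReal B ∩ E :=
    Set.subset_inter (thickening_subset_of_subset _ Set.inter_subset_left)
      ((thickening_subset_of_subset _ Set.inter_subset_right).trans hthick)
  calc μ.restrict E B = μ (B ∩ S) := by
        rw [← Measure.restrict_congr_set hμ, Measure.restrict_apply hB]
    _ ≤ ν (thickening ε.toReal (B ∩ S)) + ε := h _ (hB.inter hS)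
    _ ≤ ν (thickening ε.toReal B ∩ E) + ε := by gcongr
    _ ≤ ν.restrict E (thickening ε.toReal B) + ε :=
        add_le_add (Measure.le_restrict_apply _ _) le_rfl

theorem levyProkhorovEDist_restrict_le_of_ae_eq {α : ℝ} (hS : MeasurableSet S)
    (hthick : thickening α S ⊆ E) (hμ : S =ᵐ[μ] E) (hν : S =ᵐ[ν] E)
    (hd : levyProkhorovEDist μ ν < ENNReal.ofReal α) :
    levyProkhorovEDist (μ.restrict E) (ν.restrict E) ≤ levyProkhorovEDist μ ν := by
  have hα : 0 ≤ α := (ENNReal.ofReal_pos.mp (pos_of_gt hd)).le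
  refine levyProkhorovEDist_le_of_forall _ _ _ fun ε B hε _ hB => ?_
  -- Shrink `ε` to at most `α` so that the thickenings of `S` stay inside `E`.
  set ε' := min ε (ENNReal.ofReal α)
  have hdε' : levyProkhorovEDist μ ν < ε' := lt_min hε hd
  have hthick' : thickening ε'.toReal S ⊆ E :=
    (thickening_mono (ENNReal.toReal_le_of_le_ofReal hα (min_le_right _ _)) S).trans hthick
  exact ⟨meas_le_of_le_of_forall_le_meas_thickening_add _ _ (min_le_left _ _) <|
      restrict_le_restrict_thickening_add_of_ae_eq hS hthick' hμ
        (fun _ ↦ left_measure_le_of_levyProkhorovEDist_lt hdε') hB,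
    meas_le_of_le_of_forall_le_meas_thickening_add _ _ (min_le_left _ _) <|
      restrict_le_restrict_thickening_add_of_ae_eq hS hthick' hν
        (fun _ ↦ right_measure_le_of_levyProkhorovEDist_lt hdε') hB⟩

end

theorem levyProkhorovDist_restrict_le_general
    {X : Type*} [MetricSpace X] [MeasurableSpace X]
    (E S : Set X) (hS : MeasurableSet S) (hSE : S ⊆ E)
    (α : ℝ) (hthick : Metric.thickening α S ⊆ E)
    (μ ν : Measure X) [IsFiniteMeasure μ] [IsFiniteMeasure ν]
    (hμ : μ S = μ E) (hν : ν S = ν E)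
    (hd : levyProkhorovDist μ ν < α) :
    levyProkhorovDist (μ.restrict E) (ν.restrict E) ≤ levyProkhorovDist μ ν := by
  have hne : levyProkhorovEDist μ ν ≠ ⊤ := levyProkhorovEDist_ne_top μ ν
  refine ENNReal.toReal_mono hne <| levyProkhorovEDist_restrict_le_of_ae_eq hS hthick
    (ae_eq_of_subset_of_measure_ge hSE hμ.ge hS.nullMeasurableSet (measure_ne_top μ E))
    (ae_eq_of_subset_of_measure_ge hSE hν.ge hS.nullMeasurableSet (measure_ne_top ν E))
    ((ENNReal.lt_ofReal_iff_toReal_lt hne).mpr hd)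

/-- Let `E` be a Borel subset of a metric space `X` and `S ⊆ E` measurable
with `S^α ⊆ E` for some `α > 0` (`S^α` the set of points at distance less than `α` from `S`,
i.e. the thickening of `S`).  If `μ, ν` are finite Borel measures on `X` with
`μ(S) = μ(E)`, `ν(S) = ν(E)` and `d_LP(μ,ν) < α`, then
`d_LP(μ|_E, ν|_E) ≤ d_LP(μ,ν)`. -/
theorem levyProkhorovDist_restrict_le
    {X : Type*} [MetricSpace X] [MeasurableSpace X] [BorelSpace X]
    (E S : Set X) (hE : MeasurableSet E) (hS : MeasurableSet S) (hSE : S ⊆ E)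
    (α : ℝ) (hα : 0 < α) (hthick : Metric.thickening α S ⊆ E)
    (μ ν : Measure X) [IsFiniteMeasure μ] [IsFiniteMeasure ν]
    (hμ : μ S = μ E) (hν : ν S = ν E)
    (hd : levyProkhorovDist μ ν < α) :
    levyProkhorovDist (μ.restrict E) (ν.restrict E) ≤ levyProkhorovDist μ ν :=
  levyProkhorovDist_restrict_le_general E S hS hSE α hthick μ ν hμ hν hd
end

section
/- Let (Ω,ℙ) be a probability space, k ≥ 1 an integer and δ > 0. Let f₁,…,f_k : Ω → [−1,1] be measurable and let μ = law of the random vector (f₁,…,f_k) ∈ 𝒫(ℝ^k). Suppose d_LP(μ, N_k) < δ, where N_k is the set of probability measures on ℝ^k supported on the standard basis vectors {e₁,…,e_k}. Then there exists a measurable partition {P₁,…,P_k} of Ω such that ‖f_i − 1_{P_i}‖_1 ≤ (k³ + 3k² + 5k + 1)δ for every i ∈ {1,…,k}. -/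
/-!
Put a ball of radius `δ` around each basis vector `eᵢ`. No point within `δ` of the set `U` of
points outside all these balls is a basis vector, so a measure supported on the basis vectors
gives the `δ`-thickening of `U` no mass, and the Lévy–Prokhorov bound forces `μ U ≤ δ`.
Assign each `ω` to the first ball containing `(f₁ ω, …, f_k ω)`, or to the first index if there
is none. Off `U` the coordinate `fᵢ ω` is then within `δ` of `1_{Pᵢ} ω`, on `U` within `2`,
so `‖fᵢ - 1_{Pᵢ}‖₁ ≤ δ + 2δ`.
-/

set_option autoImplicit false

open MeasureTheory Set
open scoped ENNReal

noncomputable section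

/-- `ℝ^k` with the Euclidean metric. -/
abbrev RE (k : ℕ) : Type := EuclideanSpace ℝ (Fin k)

/-- `N_k`: the set of Borel probability measures on `ℝ^k` supported on the standard
basis vectors `e₁, …, e_k`. -/
def Nk (k : ℕ) : Set (Measure (RE k)) :=
  {ν | IsProbabilityMeasure ν ∧
    ν {y : RE k | ∀ i : Fin k, y ≠ EuclideanSpace.single i 1} = 0}

open Metric

section BallCell

variable {X ι : Type*} [PseudoMetricSpace X] [LinearOrder ι] [LocallyFiniteOrderBot ι]
  {x : ι → X} {ε : ℝ} {y : X} {i : ι}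

/-- Points outside every ball lie in every `ball (x i) ε ∪ …`, so they end up in the first cell. -/
def ballCell (x : ι → X) (ε : ℝ) : ι → Set X :=
  disjointed fun i => ball (x i) ε ∪ (⋃ j, ball (x j) ε)ᶜ

lemma measurableSet_ballCell [MeasurableSpace X] [OpensMeasurableSpace X] [Countable ι]
    (x : ι → X) (ε : ℝ) (i : ι) : MeasurableSet (ballCell x ε i) := by
  have hcover : ∀ j, MeasurableSet (ball (x j) ε ∪ (⋃ j, ball (x j) ε)ᶜ) := fun _ =>
    measurableSet_ball.union (MeasurableSet.iUnion fun _ => measurableSet_ball).compl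
  exact disjointedRec (fun _ j ht => ht.diff (hcover j)) (hcover i)

lemma pairwise_disjoint_ballCell (x : ι → X) (ε : ℝ) :
    Pairwise (Function.onFun Disjoint (ballCell x ε)) :=
  disjoint_disjointed _

lemma iUnion_ballCell [Nonempty ι] (x : ι → X) (ε : ℝ) : ⋃ i, ballCell x ε i = univ := by
  rw [ballCell, iUnion_disjointed, ← iUnion_union, union_compl_self]

lemma mem_ball_of_mem_ballCell (hy : y ∈ ballCell x ε i) (hnear : y ∈ ⋃ j, ball (x j) ε) :
    y ∈ ball (x i) ε :=
  (mem_of_subset_of_mem (disjointed_le _ i) hy).resolve_right (not_not.mpr hnear)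

lemma exists_ne_mem_ball_of_notMem_ballCell (hy : y ∉ ballCell x ε i)
    (hnear : y ∈ ⋃ j, ball (x j) ε) : ∃ j ≠ i, y ∈ ball (x j) ε := by
  obtain ⟨j₀, -⟩ := mem_iUnion.mp hnear
  have : Nonempty ι := ⟨j₀⟩
  obtain ⟨j, hj⟩ := mem_iUnion.mp (iUnion_ballCell x ε ▸ mem_univ y)
  exact ⟨j, fun hji => hy (hji ▸ hj), mem_ball_of_mem_ballCell hj hnear⟩

end BallCell

lemma thickening_compl_iUnion_ball_subset {X ι : Type*} [PseudoMetricSpace X] (x : ι → X)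
    (ε : ℝ) : thickening ε (⋃ i, ball (x i) ε)ᶜ ⊆ {y | ∀ i, y ≠ x i} := by
  rintro y hy i rfl
  obtain ⟨z, hz, hdist⟩ := mem_thickening_iff.mp hy
  exact hz (mem_iUnion_of_mem i (mem_ball_comm.mp hdist))

lemma measure_compl_iUnion_ball_le_of_levyProkhorovEDist_lt {X ι : Type*} [MeasurableSpace X]
    [PseudoMetricSpace X] [OpensMeasurableSpace X] [Countable ι] {μ ν : Measure X} {x : ι → X}
    {δ : ℝ} (hδ : 0 ≤ δ) (hν : ν {y | ∀ i, y ≠ x i} = 0)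
    (hμν : levyProkhorovEDist μ ν < ENNReal.ofReal δ) :
    μ (⋃ i, ball (x i) δ)ᶜ ≤ ENNReal.ofReal δ := by
  have hthick : ν (thickening δ (⋃ i, ball (x i) δ)ᶜ) = 0 :=
    measure_mono_null (thickening_compl_iUnion_ball_subset x δ) hν
  have hLP := left_measure_le_of_levyProkhorovEDist_lt hμν
    (MeasurableSet.iUnion fun i => measurableSet_ball (x := x i) (ε := δ)).compl
  rwa [ENNReal.toReal_ofReal hδ, hthick, zero_add] at hLP

lemma abs_apply_sub_indicator_ballCell_le {ι : Type*} [Fintype ι] [LinearOrder ι]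
    [LocallyFiniteOrderBot ι] {ε : ℝ} {y : EuclideanSpace ℝ ι} {i : ι} (hε : 0 ≤ ε)
    (hy : |y i| ≤ 1) :
    |y i - (ballCell (fun j => EuclideanSpace.single j 1) ε i).indicator (fun _ => (1 : ℝ)) y| ≤
      ε + (⋃ j, ball (EuclideanSpace.single j 1) ε)ᶜ.indicator (fun _ => (2 : ℝ)) y := by
  set e : ι → EuclideanSpace ℝ ι := fun j => EuclideanSpace.single j 1
  have hcoord : ∀ j, |y i - e j i| ≤ dist y (e j) := fun j => PiLp.dist_apply_le y (e j) i
  by_cases hnear : y ∈ ⋃ j, ball (e j) ε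
  · rw [indicator_of_notMem (notMem_compl_iff.mpr hnear), add_zero]
    by_cases hcell : y ∈ ballCell e ε i
    · have hball := mem_ball.mp (mem_ball_of_mem_ballCell hcell hnear)
      rw [indicator_of_mem hcell]
      simpa [e] using ((hcoord i).trans hball.le)
    · obtain ⟨j, hji, hball⟩ := exists_ne_mem_ball_of_notMem_ballCell hcell hnear
      rw [indicator_of_notMem hcell]
      simpa [e, PiLp.single_apply, Ne.symm hji] using (hcoord j).trans (mem_ball.mp hball).le
  · rw [indicator_of_mem (mem_compl hnear)]
    have h01 : (ballCell e ε i).indicator (fun _ => (1 : ℝ)) y ∈ Icc 0 1 := by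
      by_cases hcell : y ∈ ballCell e ε i <;> simp [hcell]
    rw [abs_le] at hy ⊢
    constructor <;> linarith [h01.1, h01.2]

lemma integral_le_add_mul_measureReal {Ω : Type*} [MeasurableSpace Ω] {ℙ : Measure Ω}
    [IsProbabilityMeasure ℙ] {F : Ω → ℝ} {S : Set Ω} {a b : ℝ} (hS : MeasurableSet S)
    (hF0 : 0 ≤ F) (hF : ∀ ω, F ω ≤ a + S.indicator (fun _ => b) ω) :
    ∫ ω, F ω ∂ℙ ≤ a + ℙ.real S * b := by
  have hint : Integrable (fun ω => a + S.indicator (fun _ => b) ω) ℙ :=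
    (integrable_const a).add ((integrable_const b).indicator hS)
  calc ∫ ω, F ω ∂ℙ ≤ ∫ ω, (a + S.indicator (fun _ => b) ω) ∂ℙ :=
        integral_mono_of_nonneg (.of_forall hF0) hint (.of_forall hF)
    _ = a + ℙ.real S * b := by
        rw [integral_add (integrable_const a) ((integrable_const b).indicator hS), integral_const,
          integral_indicator_const b hS]
        simp

theorem exists_partition_integral_abs_sub_indicator_le_three_mul {Ω ι : Type*} [MeasurableSpace Ω]
    (ℙ : Measure Ω) [IsProbabilityMeasure ℙ] [Fintype ι] [LinearOrder ι]
    [LocallyFiniteOrderBot ι] [Nonempty ι] {δ : ℝ} (hδ : 0 ≤ δ) (f : ι → Ω → ℝ)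
    (hf : ∀ i, Measurable (f i)) (hf1 : ∀ i ω, |f i ω| ≤ 1) {ν : Measure (EuclideanSpace ℝ ι)}
    (hν : ν {y | ∀ i, y ≠ EuclideanSpace.single i 1} = 0)
    (hμν : levyProkhorovEDist (ℙ.map fun ω => WithLp.toLp 2 fun i => f i ω) ν <
      ENNReal.ofReal δ) :
    ∃ P : ι → Set Ω, (∀ i, MeasurableSet (P i)) ∧ Pairwise (Function.onFun Disjoint P) ∧
      (⋃ i, P i) = univ ∧ ∀ i, ∫ ω, |f i ω - (P i).indicator (fun _ => (1 : ℝ)) ω| ∂ℙ ≤ 3 * δ := by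
  set e : ι → EuclideanSpace ℝ ι := fun j => EuclideanSpace.single j 1
  set g : Ω → EuclideanSpace ℝ ι := fun ω => WithLp.toLp 2 fun i => f i ω
  have hg : Measurable g := (WithLp.measurable_toLp 2 _).comp (measurable_pi_lambda _ hf)
  have hU : MeasurableSet (⋃ j, ball (e j) δ)ᶜ :=
    (MeasurableSet.iUnion fun _ => measurableSet_ball).compl
  have hfar : ℙ.real (g ⁻¹' (⋃ j, ball (e j) δ)ᶜ) ≤ δ := by
    have hμU := measure_compl_iUnion_ball_le_of_levyProkhorovEDist_lt hδ hν hμν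
    rw [Measure.map_apply hg hU] at hμU
    exact ENNReal.toReal_le_of_le_ofReal hδ hμU
  refine ⟨fun i => g ⁻¹' ballCell e δ i, fun i => hg (measurableSet_ballCell e δ i),
    fun i j hij => (pairwise_disjoint_ballCell e δ hij).preimage g,
    by rw [← preimage_iUnion, iUnion_ballCell, preimage_univ], fun i => ?_⟩
  calc _ ≤ δ + ℙ.real (g ⁻¹' (⋃ j, ball (e j) δ)ᶜ) * 2 :=
        integral_le_add_mul_measureReal (hg hU) (fun ω => abs_nonneg _)
          (fun ω => abs_apply_sub_indicator_ballCell_le hδ (hf1 i ω))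
    _ ≤ 3 * δ := by linarith

/-- If `f₁, …, f_k` are measurable `[-1,1]`-valued functions on a
probability space whose joint law `μ` on `ℝ^k` is at Lévy–Prokhorov distance less than
`δ` from `N_k`, then there is a measurable partition `{P₁, …, P_k}` of `Ω` with
`‖f_i − 1_{P_i}‖₁ ≤ (k³ + 3k² + 5k + 1)δ` for every `i`. -/
theorem exists_partition_of_levyProkhorov_close_to_basis
    {Ω : Type*} [MeasurableSpace Ω] (ℙ : Measure Ω) [IsProbabilityMeasure ℙ]
    (k : ℕ) (hk : 1 ≤ k) (δ : ℝ) (hδ : 0 < δ)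
    (f : Fin k → Ω → ℝ) (hf : ∀ i, Measurable (f i))
    (hf1 : ∀ i x, f i x ∈ Icc (-1 : ℝ) 1)
    (μ : Measure (RE k))
    (hμ : μ = ℙ.map (fun ω => (WithLp.equiv 2 (Fin k → ℝ)).symm fun i => f i ω))
    (hclose : (⨅ ν ∈ Nk k, levyProkhorovEDist μ ν) < ENNReal.ofReal δ) :
    ∃ P : Fin k → Set Ω, (∀ i, MeasurableSet (P i)) ∧
      Pairwise (Function.onFun Disjoint P) ∧ (⋃ i, P i) = univ ∧
      ∀ i, ∫ ω, |f i ω - (P i).indicator (fun _ => (1 : ℝ)) ω| ∂ℙ ≤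
        ((k : ℝ) ^ 3 + 3 * (k : ℝ) ^ 2 + 5 * (k : ℝ) + 1) * δ := by
  obtain ⟨ν, hν, hμν⟩ : ∃ ν ∈ Nk k, levyProkhorovEDist μ ν < ENNReal.ofReal δ := by
    simpa only [iInf_lt_iff, exists_prop] using hclose
  have : Nonempty (Fin k) := ⟨⟨0, hk⟩⟩
  subst hμ
  obtain ⟨P, hPm, hPd, hPU, hP⟩ := exists_partition_integral_abs_sub_indicator_le_three_mul ℙ
    hδ.le f hf (fun i ω => abs_le.mpr (hf1 i ω)) hν.2 hμν
  refine ⟨P, hPm, hPd, hPU, fun i => (hP i).trans (mul_le_mul_of_nonneg_right ?_ hδ.le)⟩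
  have hk' : (1 : ℝ) ≤ k := by exact_mod_cast hk
  nlinarith
end
end

section
/- The map G : 𝒫(ℝ) × [0,1] → ℝ defined by G(μ,p) = inf{x ∈ ℝ : μ((−∞,x]) ≥ p} (the generalized inverse distribution function of μ evaluated at p) is measurable, where 𝒫(ℝ) denotes the space of Borel probability measures on ℝ equipped with the Borel σ-algebra of the topology of weak convergence, and 𝒫(ℝ) × [0,1] carries the product σ-algebra. -/
/-!
For fixed `(μ, p)` the set `{x | p ≤ F_μ x}` is an upper set of `ℝ`, so its infimum only depends
on which rationals it contains: in `EReal` it is the infimum of those rationals, and `sInf` in `ℝ`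
is the `toReal` of that (both are `0` in the junk cases of the empty and the unbounded set).
Each condition `p ≤ μ (Iic r)` is measurable in `(μ, p)`, because for closed `F` the map
`μ ↦ μ F` is the pointwise limit of the weakly continuous maps `μ ↦ ∫ fₙ dμ`, where the bounded
continuous `fₙ` decrease to the indicator of `F`.
-/

set_option autoImplicit false

open MeasureTheory Set

noncomputable section

/-- The space `𝒫(ℝ)` of Borel probability measures on `ℝ`, equipped with the Borel
σ-algebra of the topology of weak convergence. -/
instance : MeasurableSpace (ProbabilityMeasure ℝ) := borel (ProbabilityMeasure ℝ)

instance : BorelSpace (ProbabilityMeasure ℝ) := ⟨rfl⟩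

theorem ProbabilityMeasure.measurable_apply_of_isClosed {X : Type*} [TopologicalSpace X]
    [HasOuterApproxClosed X] [MeasurableSpace X] [OpensMeasurableSpace X]
    [MeasurableSpace (ProbabilityMeasure X)] [OpensMeasurableSpace (ProbabilityMeasure X)]
    {F : Set X} (hF : IsClosed F) :
    Measurable fun μ : ProbabilityMeasure X => μ F := by
  refine measurable_coe_nnreal_ennreal_iff.1 ?_
  rw [funext fun μ : ProbabilityMeasure X => μ.ennreal_coeFn_eq_coeFn_toMeasure F]
  refine ENNReal.measurable_of_tendsto (fun n => ?_)
    (tendsto_pi_nhds.2 fun μ => HasOuterApproxClosed.tendsto_lintegral_apprSeq hF (μ : Measure X))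
  exact (ProbabilityMeasure.continuous_lintegral_boundedContinuousFunction _).measurable

section

open Classical

lemma IsUpperSet.iInf_rat_ite_eq_bot {S : Set ℝ} (hS : IsUpperSet S) (hbdd : ¬BddBelow S) :
    (⨅ r : ℚ, if (r : ℝ) ∈ S then ((r : ℝ) : EReal) else ⊤) = ⊥ := by
  have hmem (r : ℚ) : (r : ℝ) ∈ S := by
    obtain ⟨x, hxS, hxr⟩ := not_bddBelow_iff.1 hbdd r
    exact hS hxr.le hxS
  refine (EReal.eq_bot_iff_forall_lt _).2 fun y => ?_
  obtain ⟨r, hry⟩ := exists_rat_lt y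
  calc (⨅ r : ℚ, if (r : ℝ) ∈ S then ((r : ℝ) : EReal) else ⊤)
      ≤ ((r : ℝ) : EReal) := (iInf_le _ r).trans_eq (if_pos (hmem r))
    _ < y := EReal.coe_lt_coe_iff.2 hry

lemma IsUpperSet.iInf_rat_ite_eq_sInf {S : Set ℝ} (hS : IsUpperSet S) (hne : S.Nonempty)
    (hbdd : BddBelow S) :
    (⨅ r : ℚ, if (r : ℝ) ∈ S then ((r : ℝ) : EReal) else ⊤) = ((sInf S : ℝ) : EReal) := by
  refine le_antisymm (le_of_forall_gt_imp_ge_of_dense fun c hc => ?_) (le_iInf fun r => ?_)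
  · obtain ⟨r, har, hrc⟩ := EReal.exists_rat_btwn_of_lt hc
    obtain ⟨x, hxS, hxr⟩ := exists_lt_of_csInf_lt hne (EReal.coe_lt_coe_iff.1 har)
    exact (iInf_le _ r).trans ((if_pos (hS hxr.le hxS)).trans_le hrc.le)
  · split_ifs with hr
    · exact EReal.coe_le_coe_iff.2 (csInf_le hbdd hr)
    · exact le_top

theorem IsUpperSet.sInf_eq_toReal_iInf_rat {S : Set ℝ} (hS : IsUpperSet S) :
    sInf S = (⨅ r : ℚ, if (r : ℝ) ∈ S then ((r : ℝ) : EReal) else ⊤).toReal := by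
  rcases S.eq_empty_or_nonempty with rfl | hne
  · simp
  by_cases hbdd : BddBelow S
  · rw [hS.iInf_rat_ite_eq_sInf hne hbdd, EReal.toReal_coe]
  · rw [hS.iInf_rat_ite_eq_bot hbdd, EReal.toReal_bot, Real.sInf_of_not_bddBelow hbdd]

end

/-- The generalized inverse distribution function map
`G : 𝒫(ℝ) × [0,1] → ℝ`, `G(μ,p) = inf {x : μ((−∞,x]) ≥ p}`, is measurable, where
`𝒫(ℝ)` carries the Borel σ-algebra of the topology of weak convergence and
`𝒫(ℝ) × [0,1]` the product σ-algebra. -/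
theorem measurable_generalizedInverseCDF :
    Measurable (fun q : ProbabilityMeasure ℝ × Set.Icc (0 : ℝ) 1 =>
      sInf {x : ℝ | (q.2 : ℝ) ≤ (q.1 (Set.Iic x) : ℝ)}) := by
  have hupper (q : ProbabilityMeasure ℝ × Set.Icc (0 : ℝ) 1) :
      IsUpperSet {x : ℝ | (q.2 : ℝ) ≤ (q.1 (Set.Iic x) : ℝ)} := fun x y hxy hx =>
    hx.trans (NNReal.coe_le_coe.2 (q.1.apply_mono (Iic_subset_Iic.2 hxy)))
  simp_rw [fun q => (hupper q).sInf_eq_toReal_iInf_rat, mem_ofPred_eq]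
  refine Measurable.ereal_toReal (Measurable.iInf fun r => ?_)
  refine Measurable.ite (measurableSet_le ?_ ?_) measurable_const measurable_const
  · exact measurable_subtype_coe.comp measurable_snd
  · exact measurable_coe_nnreal_real.comp
      ((ProbabilityMeasure.measurable_apply_of_isClosed isClosed_Iic).comp measurable_fst)

end
end
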